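/- Suppose Φ is of type C_n or D_n. Then K_r = 𝒴'_r for every r ≥ 0. -/
import Mathlib


open Finset

inductive RSType where
  | B
  | C
  | D
deriving DecidableEq

noncomputable def eps (n : ℕ) (i : Fin n) : Fin n → ℝ := fun j => if j = i then 1 else 0

noncomputable def simpleRoot (n : ℕ) (t : RSType) (i : Fin n) : Fin n → ℝ :=
  if (i : ℕ) + 1 < n then
    eps n i - (fun j : Fin n => if (j : ℕ) = (i : ℕ) + 1 then 1 else 0)
  else
    match t with
    | RSType.B => eps n i
    | RSType.C => (2 : ℝ) • eps n i
    | RSType.D => (fun j : Fin n => if (j : ℕ) + 1 = (i : ℕ) then 1 else 0) + eps n i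

noncomputable def inn (n : ℕ) (x y : Fin n → ℝ) : ℝ := ∑ i, x i * y i

noncomputable def pairing (n : ℕ) (x y : Fin n → ℝ) : ℝ := 2 * inn n x y / inn n y y

/-- Membership in `Λ^{𝔭_I}` where `I = Π \ {α_{p 1}, …, α_{p k}}`:
`⟨μ, α^∨⟩ ∈ ℕ` for all simple roots `α ∈ I`. -/
def inLam (n : ℕ) (t : RSType) (p : ℕ → ℕ) (k : ℕ) (μ : Fin n → ℝ) : Prop :=
  ∀ i : Fin n, (∀ j, 1 ≤ j → j ≤ k → (i : ℕ) + 1 ≠ p j) →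
    ∃ m : ℕ, pairing n μ (simpleRoot n t i) = (m : ℝ)

def inLamZ (n : ℕ) (t : RSType) (p : ℕ → ℕ) (k : ℕ) (a : Fin n → ℤ) : Prop :=
  inLam n t p k (fun i => (a i : ℝ))

/-- `𝒳_r = {a ∈ ℤ^n : Σ |a_i| ≤ r}` (empty if `r < 0`). -/
def Xr (n : ℕ) (r : ℤ) : Set (Fin n → ℤ) := {a | ∑ i, |a i| ≤ r}

/-- `𝒳'_r = {a ∈ 𝒳_r : Σ a_i ≡ r (mod 2)}`. -/
def Xr' (n : ℕ) (r : ℤ) : Set (Fin n → ℤ) :=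
  {a | a ∈ Xr n r ∧ (2 : ℤ) ∣ ((∑ i, a i) - r)}

/-- `𝒳'_{r,j}`: for `j < n - pk` those `a ∈ 𝒳'_r` with `a_{n-j} ≠ 0`; and
`𝒳'_{r, n - pk} = 𝒳'_r`. -/
def Xrj (n : ℕ) (pk : ℕ) (r : ℤ) (j : ℕ) : Set (Fin n → ℤ) :=
  if j = n - pk then Xr' n r
  else {a | a ∈ Xr' n r ∧ ∃ i : Fin n, (i : ℕ) + j + 1 = n ∧ a i ≠ 0}

def Yr (n : ℕ) (t : RSType) (p : ℕ → ℕ) (k : ℕ) (r : ℤ) : Set (Fin n → ℤ) :=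
  {a | a ∈ Xr n r ∧ inLamZ n t p k a}

def Yr' (n : ℕ) (t : RSType) (p : ℕ → ℕ) (k : ℕ) (r : ℤ) : Set (Fin n → ℤ) :=
  {a | a ∈ Xr' n r ∧ inLamZ n t p k a}

def Yrj (n : ℕ) (t : RSType) (p : ℕ → ℕ) (k : ℕ) (r : ℤ) (j : ℕ) : Set (Fin n → ℤ) :=
  {a | a ∈ Xrj n (p k) r j ∧ inLamZ n t p k a}

def epsZ (n : ℕ) (i : Fin n) : Fin n → ℤ := fun j => if j = i then 1 else 0

/-- The set `S_μ`: in type `B_n`, if `α_n ∉ I` (i.e. `p k = n`) or `μ_n ≠ 0`, it is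
`{μ + hε_i ∈ Λ^{𝔭_I} : 1 ≤ i ≤ n, h ∈ {0, 1, -1}}`; otherwise (and in types `C_n`,
`D_n`) it is `{μ + hε_i ∈ Λ^{𝔭_I} : 1 ≤ i ≤ n, h ∈ {1, -1}}`. -/
def SS (n : ℕ) (t : RSType) (p : ℕ → ℕ) (k : ℕ) (μ : Fin n → ℤ) : Set (Fin n → ℤ) :=
  {ν | (∃ (i : Fin n) (h : ℤ),
          h ∈ (if t = RSType.B ∧ (p k = n ∨ ∃ i' : Fin n, (i' : ℕ) = n - 1 ∧ μ i' ≠ 0)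
               then ({0, 1, -1} : Set ℤ) else ({1, -1} : Set ℤ)) ∧
          ν = μ + h • epsZ n i) ∧
        inLamZ n t p k ν}

/-- `K_0 = {0}` and `K_r = ⋃_{μ ∈ K_{r-1}} S_μ`. -/
def KK (n : ℕ) (t : RSType) (p : ℕ → ℕ) (k : ℕ) : ℕ → Set (Fin n → ℤ)
  | 0 => {0}
  | r + 1 => ⋃ μ ∈ KK n t p k r, SS n t p k μ

section Aux

variable {n k : ℕ} {t : RSType} {p : ℕ → ℕ}

lemma exists_natCast_iff (z : ℤ) : (∃ m : ℕ, (z : ℝ) = (m : ℝ)) ↔ 0 ≤ z := by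
  constructor
  · rintro ⟨m, hm⟩
    have : z = (m : ℤ) := by exact_mod_cast hm
    omega
  · intro h
    refine ⟨z.toNat, ?_⟩
    have := (Int.toNat_of_nonneg h).symm
    exact_mod_cast congrArg (fun w : ℤ => (w : ℝ)) this

lemma inn_eps (x : Fin n → ℝ) (i : Fin n) : inn n x (eps n i) = x i := by
  simp [inn, eps, mul_ite]

lemma inn_add' (x y z : Fin n → ℝ) : inn n x (y + z) = inn n x y + inn n x z := by
  simp [inn, mul_add, Finset.sum_add_distrib]

lemma inn_sub' (x y z : Fin n → ℝ) : inn n x (y - z) = inn n x y - inn n x z := by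
  simp [inn, mul_sub, Finset.sum_sub_distrib]

lemma inn_smul' (x y : Fin n → ℝ) (c : ℝ) : inn n x (c • y) = c * inn n x y := by
  simp [inn, Finset.mul_sum, mul_left_comm]

lemma pairing_lt (x : Fin n → ℝ) (i i' : Fin n) (hii' : (i : ℕ) + 1 = (i' : ℕ)) :
    pairing n x (simpleRoot n t i) = x i - x i' := by
  have hlt : (i : ℕ) + 1 < n := by have := i'.isLt; omega
  have hne : i ≠ i' := fun h => by rw [h] at hii'; omega
  have hfun : (fun j : Fin n => if (j : ℕ) = (i : ℕ) + 1 then (1 : ℝ) else 0) = eps n i' := by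
    funext j
    simp only [eps]
    by_cases hj : j = i'
    · subst hj; rw [if_pos (by omega), if_pos rfl]
    · rw [if_neg (fun hc => hj (Fin.ext (by omega))), if_neg hj]
  have hroot : simpleRoot n t i = eps n i - eps n i' := by
    rw [simpleRoot.eq_def, if_pos hlt, hfun]
  have h1 : inn n x (simpleRoot n t i) = x i - x i' := by
    rw [hroot, inn_sub', inn_eps, inn_eps]
  have h2 : inn n (simpleRoot n t i) (simpleRoot n t i) = 2 := by
    rw [hroot, inn_sub', inn_eps, inn_eps]
    norm_num [eps, hne, Ne.symm hne]
  rw [pairing, h1, h2]; ring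

lemma pairing_C (x : Fin n → ℝ) (i : Fin n) (hi : ¬ ((i : ℕ) + 1 < n)) :
    pairing n x (simpleRoot n RSType.C i) = x i := by
  have hroot : simpleRoot n RSType.C i = (2 : ℝ) • eps n i := by
    rw [simpleRoot.eq_def, if_neg hi]
  have h1 : inn n x (simpleRoot n RSType.C i) = 2 * x i := by
    rw [hroot, inn_smul', inn_eps]
  have h2 : inn n (simpleRoot n RSType.C i) (simpleRoot n RSType.C i) = 4 := by
    rw [hroot, inn_smul', inn_eps]
    norm_num [eps]
  rw [pairing, h1, h2]; ring

lemma pairing_D (x : Fin n → ℝ) (i' i : Fin n) (hi : ¬ ((i : ℕ) + 1 < n))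
    (h2 : (i' : ℕ) + 1 = (i : ℕ)) :
    pairing n x (simpleRoot n RSType.D i) = x i' + x i := by
  have hne : i' ≠ i := fun h => by rw [h] at h2; omega
  have hfun : (fun j : Fin n => if (j : ℕ) + 1 = (i : ℕ) then (1 : ℝ) else 0) = eps n i' := by
    funext j
    simp only [eps]
    by_cases hj : j = i'
    · subst hj; rw [if_pos h2, if_pos rfl]
    · rw [if_neg (fun hc => hj (Fin.ext (by omega))), if_neg hj]
  have hroot : simpleRoot n RSType.D i = eps n i' + eps n i := by
    rw [simpleRoot.eq_def, if_neg hi]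
    show (fun j : Fin n => if (j : ℕ) + 1 = (i : ℕ) then (1 : ℝ) else 0) + eps n i = _
    rw [hfun]
  have ha : inn n x (simpleRoot n RSType.D i) = x i' + x i := by
    rw [hroot, inn_add', inn_eps, inn_eps]
  have hb : inn n (simpleRoot n RSType.D i) (simpleRoot n RSType.D i) = 2 := by
    rw [hroot, inn_add', inn_eps, inn_eps]
    norm_num [eps, hne, Ne.symm hne]
  rw [pairing, ha, hb]; ring

/-- Explicit characterization of `inLamZ` in types C and D. -/
def GoodA (n k : ℕ) (t : RSType) (p : ℕ → ℕ) (a : Fin n → ℤ) : Prop :=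
  (∀ i i' : Fin n, (i : ℕ) + 1 = (i' : ℕ) →
      (∀ j, 1 ≤ j → j ≤ k → (i' : ℕ) ≠ p j) → a i' ≤ a i) ∧
  ((∀ j, 1 ≤ j → j ≤ k → n ≠ p j) →
      (t = RSType.C → ∀ i : Fin n, (i : ℕ) + 1 = n → 0 ≤ a i) ∧
      (t = RSType.D → ∀ i' i : Fin n, (i' : ℕ) + 1 = (i : ℕ) → (i : ℕ) + 1 = n →
        0 ≤ a i' + a i))

lemma inLamZ_iff (hn : 2 ≤ n) (ht : t = RSType.C ∨ t = RSType.D) (a : Fin n → ℤ) :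
    inLamZ n t p k a ↔ GoodA n k t p a := by
  constructor
  · intro H
    constructor
    · intro i i' hii' hreq
      have := H i (by intro j h1 h2 hc; exact hreq j h1 h2 (by omega))
      rw [pairing_lt _ i i' hii'] at this
      have h' : (0 : ℤ) ≤ a i - a i' := by
        rw [← exists_natCast_iff]
        obtain ⟨m, hm⟩ := this
        exact ⟨m, by push_cast; push_cast at hm; linarith⟩
      omega
    · intro hreq
      constructor
      · rintro rfl i hi
        have := H i (by intro j h1 h2 hc; exact hreq j h1 h2 (by omega))
        rw [pairing_C _ i (by omega)] at this
        have h' : (0 : ℤ) ≤ a i := by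
          rw [← exists_natCast_iff]
          obtain ⟨m, hm⟩ := this
          exact ⟨m, by exact_mod_cast hm⟩
        exact h'
      · rintro rfl i' i h1 h2
        have := H i (by intro j hj1 hj2 hc; exact hreq j hj1 hj2 (by omega))
        rw [pairing_D _ i' i (by omega) h1] at this
        have h' : (0 : ℤ) ≤ a i' + a i := by
          rw [← exists_natCast_iff]
          obtain ⟨m, hm⟩ := this
          exact ⟨m, by push_cast; push_cast at hm; linarith⟩
        exact h'
  · rintro ⟨H1, H2⟩ i hreq
    by_cases hi : (i : ℕ) + 1 < n
    · set i' : Fin n := ⟨(i : ℕ) + 1, hi⟩ with hi'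
      rw [pairing_lt (fun j => (a j : ℝ)) i i' rfl]
      have := H1 i i' rfl (by intro j h1 h2 hc; exact hreq j h1 h2 (by rw [← hc]))
      have h' : (0 : ℤ) ≤ a i - a i' := by omega
      obtain ⟨m, hm⟩ := (exists_natCast_iff _).mpr h'
      exact ⟨m, by push_cast; push_cast at hm; linarith⟩
    · have hin : (i : ℕ) + 1 = n := by have := i.isLt; omega
      have hreq' : ∀ j, 1 ≤ j → j ≤ k → n ≠ p j := by
        intro j h1 h2 hc; exact hreq j h1 h2 (by omega)
      rcases ht with rfl | rfl
      · rw [pairing_C (fun j => (a j : ℝ)) i hi]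
        have := (H2 hreq').1 rfl i hin
        obtain ⟨m, hm⟩ := (exists_natCast_iff _).mpr this
        exact ⟨m, hm⟩
      · set i' : Fin n := ⟨(i : ℕ) - 1, by omega⟩ with hi'
        have hii : (i' : ℕ) + 1 = (i : ℕ) := by simp [hi']; omega
        rw [pairing_D (fun j => (a j : ℝ)) i' i hi hii]
        have := (H2 hreq').2 rfl i' i hii hin
        obtain ⟨m, hm⟩ := (exists_natCast_iff _).mpr this
        exact ⟨m, by push_cast; push_cast at hm; linarith⟩

end Aux

section Aux2

variable {n k : ℕ} {t : RSType} {p : ℕ → ℕ}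

lemma sum_upd (f : Fin n → ℤ) (i : Fin n) (b : ℤ) :
    ∑ j, Function.update f i b j = ∑ j, f j - f i + b := by
  classical
  rw [Finset.sum_update_of_mem (Finset.mem_univ i), Finset.sdiff_singleton_eq_erase,
    Finset.sum_erase_eq_sub (Finset.mem_univ i)]
  ring

lemma sum_abs_upd (f : Fin n → ℤ) (i : Fin n) (b : ℤ) :
    ∑ j, |Function.update f i b j| = ∑ j, |f j| - |f i| + |b| := by
  classical
  have h : ∀ j, |Function.update f i b j| = Function.update (fun j => |f j|) i |b| j := by
    intro j
    simp only [Function.update_apply]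
    split <;> rfl
  rw [Finset.sum_congr rfl fun j _ => h j, sum_upd]

lemma add_smul_epsZ (f : Fin n → ℤ) (i : Fin n) (h : ℤ) :
    f + h • epsZ n i = Function.update f i (f i + h) := by
  funext j
  by_cases hj : j = i <;> simp [epsZ, Function.update_apply, hj]

lemma upd_eq_add_smul (f : Fin n → ℤ) (i : Fin n) (h : ℤ) :
    f = Function.update f i (f i - h) + h • epsZ n i := by
  rw [add_smul_epsZ]
  funext j
  by_cases hj : j = i <;> simp [Function.update_apply, hj]

/-- The key combinatorial step: a nonzero `GoodA` vector can be shrunk. -/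
lemma step (hn : 2 ≤ n) (ht : t = RSType.C ∨ t = RSType.D)
    (hlt : ∀ j m, j < m → m ≤ k → p j < p m)
    (hpk : p k ≤ n) (hpkD : t = RSType.D → p k ≠ n - 1)
    (a : Fin n → ℤ) (hG : GoodA n k t p a) (hne : a ≠ 0) :
    ∃ (i : Fin n) (h : ℤ), (h = 1 ∨ h = -1) ∧
      GoodA n k t p (Function.update a i (a i - h)) ∧ |a i - h| = |a i| - 1 := by
  obtain ⟨H1, H2⟩ := hG
  have hreqD : t = RSType.D → (∀ j, 1 ≤ j → j ≤ k → n ≠ p j) →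
      (∀ j, 1 ≤ j → j ≤ k → n - 1 ≠ p j) := by
    intro htD hrn j h1 h2 hc
    rcases Nat.lt_or_ge j k with hjk | hjk
    · have h3 := hlt j k hjk le_rfl
      have h4 := hrn k (by omega) le_rfl
      omega
    · have : j = k := by omega
      subst this
      exact hpkD htD hc.symm
  by_cases hneg : ∃ j, a j < 0
  · -- increment the leftmost negative entry
    classical
    set S : Finset (Fin n) := Finset.univ.filter (fun j => a j < 0) with hS
    have hSne : S.Nonempty := by
      obtain ⟨j, hj⟩ := hneg
      exact ⟨j, by simp [hS, hj]⟩
    set i : Fin n := S.min' hSne with hi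
    have hai : a i < 0 := by
      have h := S.min'_mem hSne
      rw [← hi] at h
      simpa [hS] using h
    have hmin : ∀ j : Fin n, j < i → 0 ≤ a j := by
      intro j hj
      by_contra hcon
      have hjS : j ∈ S := by simp [hS]; omega
      have := S.min'_le j hjS
      rw [← hi] at this
      exact absurd (lt_of_lt_of_le hj this) (lt_irrefl j)
    refine ⟨i, -1, Or.inr rfl, ⟨?_, ?_⟩, ?_⟩
    · intro m m' hmm' hreq
      simp only [Function.update_apply]
      by_cases hA : m = i
      · have hB : ¬ m' = i := by
          intro hc
          rw [hA] at hmm'; rw [hc] at hmm'; omega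
        rw [if_pos hA, if_neg hB]
        have h := H1 m m' hmm' hreq
        rw [hA] at h
        omega
      · by_cases hB : m' = i
        · rw [if_neg hA, if_pos hB]
          have hlt' : m < i := by
            rw [Fin.lt_iff_val_lt_val]
            have : (m' : ℕ) = (i : ℕ) := by rw [hB]
            omega
          have := hmin m hlt'
          omega
        · rw [if_neg hA, if_neg hB]
          exact H1 m m' hmm' hreq
    · intro hreq
      constructor
      · rintro rfl i0 hi0
        have hC := (H2 hreq).1 rfl i0 hi0
        simp only [Function.update_apply]
        by_cases hA : i0 = i
        · rw [hA] at hC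
          rw [if_pos hA]
          omega
        · rw [if_neg hA]
          exact hC
      · rintro rfl i0' i0 h10 h20
        have hmaux := H1 i0' i0 h10 (by
          intro j h1 h2 hc
          exact hreqD rfl hreq j h1 h2 (by omega))
        have hD := (H2 hreq).2 rfl i0' i0 h10 h20
        have hne10 : i0' ≠ i0 := by
          intro hc
          rw [hc] at h10; omega
        simp only [Function.update_apply]
        by_cases hA : i0' = i
        · have hB : ¬ i0 = i := fun hc => hne10 (hA.trans hc.symm)
          rw [hA] at hmaux hD
          exact absurd hD (by omega)
        · by_cases hB : i0 = i
          · rw [hB] at hD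
            rw [if_neg hA, if_pos hB]
            omega
          · rw [if_neg hA, if_neg hB]
            omega
    · rw [abs_of_nonpos (by omega : a i - -1 ≤ 0), abs_of_neg hai]
      ring
  · -- decrement the rightmost positive entry
    classical
    push_neg at hneg
    have hpos : ∀ j, 0 ≤ a j := hneg
    set S : Finset (Fin n) := Finset.univ.filter (fun j => 0 < a j) with hS
    have hSne : S.Nonempty := by
      have : ∃ j, a j ≠ 0 := by
        by_contra hc
        push_neg at hc
        exact hne (funext fun j => hc j)
      obtain ⟨j, hj⟩ := this
      refine ⟨j, by simp [hS]; have := hpos j; omega⟩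
    set i : Fin n := S.max' hSne with hi
    have hai : 0 < a i := by
      have h := S.max'_mem hSne
      rw [← hi] at h
      simpa [hS] using h
    have hmax : ∀ j : Fin n, i < j → a j = 0 := by
      intro j hj
      by_contra hcon
      have hjS : j ∈ S := by simp [hS]; have := hpos j; omega
      have := S.le_max' j hjS
      rw [← hi] at this
      exact absurd (lt_of_lt_of_le hj this) (lt_irrefl i)
    have hupd : ∀ j, 0 ≤ Function.update a i (a i - 1) j := by
      intro j
      have := hpos j
      simp only [Function.update_apply]
      split <;> omega
    refine ⟨i, 1, Or.inl rfl, ⟨?_, ?_⟩, ?_⟩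
    · intro m m' hmm' hreq
      simp only [Function.update_apply]
      by_cases hA : m = i
      · have hB : ¬ m' = i := by
          intro hc
          rw [hA] at hmm'; rw [hc] at hmm'; omega
        rw [if_pos hA, if_neg hB]
        have hlt' : i < m' := by
          rw [Fin.lt_iff_val_lt_val]
          have : (m : ℕ) = (i : ℕ) := by rw [hA]
          omega
        have := hmax m' hlt'
        omega
      · by_cases hB : m' = i
        · rw [if_neg hA, if_pos hB]
          have h := H1 m m' hmm' hreq
          rw [hB] at h
          omega
        · rw [if_neg hA, if_neg hB]
          exact H1 m m' hmm' hreq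
    · intro _
      constructor
      · rintro rfl i0 _
        exact hupd i0
      · rintro rfl i0' i0 _ _
        exact add_nonneg (hupd i0') (hupd i0)
    · rw [abs_of_nonneg (by omega : (0:ℤ) ≤ a i - 1), abs_of_pos hai]

end Aux2

/-- Lemma 6.4(2): in types `C_n` and `D_n`, `K_r = 𝒴'_r`. -/
theorem stmt3 (n k : ℕ) (hn : 2 ≤ n) (t : RSType)
    (ht : t = RSType.C ∨ t = RSType.D)
    (p : ℕ → ℕ) (hp0 : p 0 = 0)
    (hmono : ∀ j, j < k → p j < p (j + 1))
    (hpk : p k ≤ n) (hpk1 : p (k + 1) = n)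
    (hpkD : t = RSType.D → p k ≠ n - 1)
    (r : ℕ) :
    KK n t p k r = Yr' n t p k (r : ℤ) := by
  have hlt : ∀ m, m ≤ k → ∀ j, j < m → p j < p m := by
    intro m
    induction m with
    | zero => intro _ j hj; omega
    | succ m ih =>
      intro hmk j hj
      have hm : p m < p (m + 1) := hmono m (by omega)
      rcases Nat.lt_succ_iff_lt_or_eq.mp hj with h | h
      · exact lt_trans (ih (by omega) j h) hm
      · subst h; exact hm
  have hBne : t ≠ RSType.B := by rcases ht with rfl | rfl <;> simp
  induction r with
  | zero =>
    ext a
    simp only [KK, Set.mem_singleton_iff, Yr', Xr', Xr, Set.mem_setOf_eq, Nat.cast_zero]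
    constructor
    · rintro rfl
      refine ⟨⟨?_, ?_⟩, ?_⟩
      · simp
      · simp
      · rw [inLamZ_iff hn ht]
        refine ⟨?_, fun _ => ⟨?_, ?_⟩⟩
        · intro m m' _ _; simp
        · intro _ i0 _; simp
        · intro _ i0' i0 _ _; simp
    · rintro ⟨⟨h1, _⟩, _⟩
      have hs0 : ∑ j, |a j| = 0 :=
        le_antisymm h1 (Finset.sum_nonneg fun j _ => abs_nonneg (a j))
      funext j
      have := (Finset.sum_eq_zero_iff_of_nonneg fun j _ => abs_nonneg (a j)).mp hs0 j
        (Finset.mem_univ j)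
      show a j = 0
      exact abs_eq_zero.mp this
  | succ r ih =>
    ext ν
    constructor
    · intro hν
      simp only [KK, Set.mem_iUnion, exists_prop] at hν
      obtain ⟨μ, hμK, hνS⟩ := hν
      rw [ih] at hμK
      obtain ⟨⟨hμX, hμpar⟩, hμlam⟩ := hμK
      simp only [SS, Set.mem_setOf_eq] at hνS
      obtain ⟨⟨i, h, hh, rfl⟩, hνlam⟩ := hνS
      rw [if_neg (fun hc => hBne hc.1)] at hh
      have hh' : h = 1 ∨ h = -1 := by simpa using hh
      have hμX' : ∑ j, |μ j| ≤ (r : ℤ) := hμX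
      obtain ⟨c, hc⟩ := hμpar
      refine ⟨⟨?_, ?_⟩, hνlam⟩
      · show ∑ j, |(μ + h • epsZ n i) j| ≤ ((r + 1 : ℕ) : ℤ)
        rw [add_smul_epsZ, sum_abs_upd]
        have habs : |μ i + h| ≤ |μ i| + 1 := by
          calc |μ i + h| ≤ |μ i| + |h| := abs_add_le _ _
          _ = |μ i| + 1 := by rcases hh' with rfl | rfl <;> norm_num
        push_cast
        omega
      · show (2 : ℤ) ∣ (∑ j, (μ + h • epsZ n i) j) - ((r + 1 : ℕ) : ℤ)
        rw [add_smul_epsZ, sum_upd]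
        push_cast
        rcases hh' with rfl | rfl <;> omega
    · intro hν
      obtain ⟨⟨hX, hpar⟩, hlam⟩ := hν
      have hX' : ∑ j, |ν j| ≤ ((r + 1 : ℕ) : ℤ) := hX
      simp only [KK, Set.mem_iUnion, exists_prop]
      by_cases hz : ν = 0
      · subst hz
        have hsum0 : ∑ j, (0 : Fin n → ℤ) j = 0 := by simp
        have h2 : (2 : ℤ) ∣ (0 - ((r + 1 : ℕ) : ℤ)) := by
          rw [← hsum0]; exact hpar
        have hr1 : 1 ≤ r := by
          rcases h2 with ⟨c, hc⟩
          push_cast at hc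
          omega
        set i0 : Fin n := ⟨0, by omega⟩ with hi0
        have habs1 : ∀ j : Fin n, |epsZ n i0 j| = epsZ n i0 j := by
          intro j; simp only [epsZ]; split <;> norm_num
        have hsum1 : ∑ j, epsZ n i0 j = 1 := by
          simp [epsZ]
        refine ⟨epsZ n i0, ?_, ?_⟩
        · rw [ih]
          refine ⟨⟨?_, ?_⟩, ?_⟩
          · show ∑ j, |epsZ n i0 j| ≤ (r : ℤ)
            rw [Finset.sum_congr rfl fun j _ => habs1 j, hsum1]
            exact_mod_cast hr1
          · show (2 : ℤ) ∣ (∑ j, epsZ n i0 j) - (r : ℤ)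
            rw [hsum1]
            rcases h2 with ⟨c, hc⟩
            push_cast at hc ⊢
            omega
          · rw [inLamZ_iff hn ht]
            have hE : ∀ j : Fin n, (0 : ℤ) ≤ epsZ n i0 j := by
              intro j; simp only [epsZ]; split <;> norm_num
            refine ⟨?_, fun _ => ⟨?_, ?_⟩⟩
            · intro m m' hmm' _
              have hne0 : m' ≠ i0 := by
                intro hcon
                have := congrArg Fin.val hcon
                simp [hi0] at this
                omega
              have h0 : epsZ n i0 m' = 0 := by simp [epsZ, hne0]
              rw [h0]; exact hE m
            · intro _ j _; exact hE j
            · intro _ j' j _ _; exact add_nonneg (hE j') (hE j)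
        · refine ⟨⟨i0, -1, ?_, ?_⟩, hlam⟩
          · rw [if_neg (fun hc => hBne hc.1)]
            simp
          · funext j
            simp [epsZ]
      · have hGood : GoodA n k t p ν := (inLamZ_iff hn ht ν).mp hlam
        obtain ⟨i, h, hh', hGμ, habs⟩ :=
          step hn ht (fun j m hjm hmk => hlt m hmk j hjm) hpk hpkD ν hGood hz
        refine ⟨Function.update ν i (ν i - h), ?_, ?_⟩
        · rw [ih]
          refine ⟨⟨?_, ?_⟩, (inLamZ_iff hn ht _).mpr hGμ⟩
          · show ∑ j, |Function.update ν i (ν i - h) j| ≤ (r : ℤ)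
            rw [sum_abs_upd, habs]
            push_cast at hX'
            omega
          · show (2 : ℤ) ∣ (∑ j, Function.update ν i (ν i - h) j) - (r : ℤ)
            rw [sum_upd]
            obtain ⟨c, hc⟩ := hpar
            push_cast at hc
            rcases hh' with rfl | rfl <;> omega
        · refine ⟨⟨i, h, ?_, upd_eq_add_smul ν i h⟩, hlam⟩
          rw [if_neg (fun hc => hBne hc.1)]
          rcases hh' with rfl | rfl <;> simp
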